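/- There exists a simple graph G on the positive integers that is I_7-free and satisfies liminf_{n→∞} e(G_n)/n² ≥ 365/1701, i.e., ≥ (1/4)(1 − 1/7) + 1/3402. -/

import Mathlib

open Filter

/-- `G` contains an increasing path of length `k`: vertices
`i₁ < i₂ < ⋯ < i_{k+1}` (all positive integers) with consecutive vertices adjacent. -/
def HasIncPath (G : SimpleGraph ℕ) (k : ℕ) : Prop :=
  ∃ f : Fin (k + 1) → ℕ, (∀ i, 1 ≤ f i) ∧ StrictMono f ∧
    ∀ i : Fin k, G.Adj (f i.castSucc) (f i.succ)

/-- `e(G_n)`: the number of edges of the subgraph of `G` induced by `{1, …, n}`. -/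
noncomputable def edgeCount (G : SimpleGraph ℕ) (n : ℕ) : ℕ :=
  {p : ℕ × ℕ | 1 ≤ p.1 ∧ p.1 < p.2 ∧ p.2 ≤ n ∧ G.Adj p.1 p.2}.ncard

/-!
Colour each vertex `i` by a colour `color i < 7` and join `i < j` exactly when
`color i < color j`: colours strictly increase along an increasing path, so there is no `I_7`.
The colour of `i` depends only on its first three base-4 digits `T ∈ [16, 64)`, so every block
`[T 4^m, (T + 1) 4^m)` is monochromatic and the colouring is self-similar under `i ↦ 4i`.
Counting level by level, `e(T 4^m)` is an explicit quadratic in `x = 4^m` for `16 ≤ T ≤ 64`, and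
the inequality `e(n) ≥ (365/1701) n² - 5n` at these block endpoints reduces to a finite check on
its coefficients. Inside a block `e` is affine while `n²` is convex, so the endpoints suffice.
-/

open Finset

theorem edgeCount_le_sq (G : SimpleGraph ℕ) (n : ℕ) : edgeCount G n ≤ n ^ 2 := by
  calc edgeCount G n ≤ (↑(Icc 1 n ×ˢ Icc 1 n) : Set (ℕ × ℕ)).ncard :=
        Set.ncard_le_ncard (fun p ⟨_, _, _, _⟩ => by
          simp only [coe_product, Set.mem_prod, coe_Icc, Set.mem_Icc]; omega) (finite_toSet _)
    _ = n ^ 2 := by rw [Set.ncard_coe_finset, card_product, Nat.card_Icc, add_tsub_cancel_right, sq]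

theorem le_liminf_div_sq {f : ℕ → ℕ} {α β : ℝ} (hf : ∀ᶠ n in atTop, α * n ^ 2 - β * n ≤ f n)
    (hf' : ∀ n, f n ≤ n ^ 2) : α ≤ liminf (fun n => (f n : ℝ) / n ^ 2) atTop := by
  have hlim : Tendsto (fun n : ℕ => α - β / n) atTop (nhds α) := by
    simpa using tendsto_const_nhds.sub (tendsto_const_div_atTop_nhds_zero_nat β)
  rw [← hlim.liminf_eq]
  refine liminf_le_liminf ?_ hlim.isBoundedUnder_ge (isCoboundedUnder_ge_of_le atTop (x := 1) ?_)
  · filter_upwards [hf, eventually_gt_atTop 0] with n hn hn₀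
    rw [le_div_iff₀ (by positivity)]
    calc (α - β / n) * (n : ℝ) ^ 2 = α * n ^ 2 - β * n := by field_simp
      _ ≤ (f n : ℝ) := hn
  · intro n
    exact div_le_one_of_le₀ (by exact_mod_cast hf' n) (by positivity)

theorem quadratic_nonneg_of_one_le {a b c x : ℝ} (ha : 0 ≤ a) (hb : 0 ≤ b) (habc : 0 ≤ a + b + c)
    (hx : 1 ≤ x) : 0 ≤ a * x ^ 2 + b * x + c := by
  nlinarith [mul_nonneg ha (by nlinarith : 0 ≤ x ^ 2 - 1), mul_nonneg hb (sub_nonneg.2 hx)]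

theorem sq_sub_le_affine_of_endpoints {α β p x t s g : ℝ} (hα : 0 ≤ α) (ht : 0 ≤ t) (htx : t ≤ x)
    (h₀ : α * p ^ 2 - β * p ≤ g) (h₁ : α * (p + x) ^ 2 - β * (p + x) ≤ g + x * s) :
    α * (p + t) ^ 2 - β * (p + t) ≤ g + t * s := by
  rcases (ht.trans htx).eq_or_lt with rfl | hx
  · obtain rfl : t = 0 := le_antisymm htx ht
    simpa using h₀
  have hsplit : x * (g + t * s - (α * (p + t) ^ 2 - β * (p + t))) =
      (x - t) * (g - (α * p ^ 2 - β * p)) + t * (g + x * s - (α * (p + x) ^ 2 - β * (p + x)))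
        + α * x * t * (x - t) := by ring
  have hnonneg : 0 ≤ x * (g + t * s - (α * (p + t) ^ 2 - β * (p + t))) := by
    rw [hsplit]
    have := sub_nonneg.2 htx
    have := sub_nonneg.2 h₀
    have := sub_nonneg.2 h₁
    positivity
  linarith [nonneg_of_mul_nonneg_right hnonneg hx]

section ColorGraph

variable (c : ℕ → ℕ)

def colorGraph : SimpleGraph ℕ := SimpleGraph.fromRel fun i j => i < j ∧ c i < c j

variable {c}

theorem colorGraph_adj_of_lt {i j : ℕ} (h : i < j) : (colorGraph c).Adj i j ↔ c i < c j := by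
  simp only [colorGraph, SimpleGraph.fromRel_adj]
  constructor
  · rintro ⟨-, ⟨-, h'⟩ | ⟨h', -⟩⟩
    · exact h'
    · exact absurd h' h.not_gt
  · exact fun h' => ⟨h.ne, Or.inl ⟨h, h'⟩⟩

theorem not_hasIncPath_colorGraph {k : ℕ} (hc : ∀ i, c i < k) : ¬ HasIncPath (colorGraph c) k := by
  rintro ⟨f, -, hf, hadj⟩
  have hcolor : ∀ i : Fin (k + 1), (i : ℕ) ≤ c (f i) := by
    intro i
    induction i using Fin.induction with
    | zero => exact Nat.zero_le _
    | succ i ih =>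
      have := (colorGraph_adj_of_lt (hf i.castSucc_lt_succ)).1 (hadj i)
      simp only [Fin.val_succ, Fin.val_castSucc] at ih ⊢
      omega
  exact (hcolor (Fin.last k)).not_gt (by simpa using hc (f (Fin.last k)))

end ColorGraph

section Counting

variable (c : ℕ → ℕ)

def countBelow (b n : ℕ) : ℕ := #{i ∈ Ico 1 n | c i < b}

def ascPairCount (n : ℕ) : ℕ := ∑ j ∈ range n, countBelow c (c j) j

variable {c}

theorem edgeCount_colorGraph (n : ℕ) : edgeCount (colorGraph c) n = ascPairCount c (n + 1) := by
  have hset : {p : ℕ × ℕ | 1 ≤ p.1 ∧ p.1 < p.2 ∧ p.2 ≤ n ∧ (colorGraph c).Adj p.1 p.2} =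
      ↑{p ∈ range (n + 1) ×ˢ range (n + 1) | 1 ≤ p.1 ∧ p.1 < p.2 ∧ c p.1 < c p.2} := by
    ext ⟨i, j⟩
    simp only [Set.mem_ofPred_eq, coe_filter, mem_product, mem_range]
    constructor
    · rintro ⟨hi, hij, hj, hadj⟩
      exact ⟨⟨by omega, by omega⟩, hi, hij, (colorGraph_adj_of_lt hij).1 hadj⟩
    · rintro ⟨⟨-, hj⟩, hi, hij, hc⟩
      exact ⟨hi, hij, by omega, (colorGraph_adj_of_lt hij).2 hc⟩
  rw [edgeCount, hset, Set.ncard_coe_finset, card_filter, sum_product_right, ascPairCount]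
  refine sum_congr rfl fun j hj => ?_
  rw [countBelow, ← card_filter]
  congr 1
  ext i
  simp only [mem_filter, mem_range, mem_Ico]
  have := mem_range.1 hj
  omega

theorem countBelow_succ {b n : ℕ} (hn : 1 ≤ n) :
    countBelow c b (n + 1) = countBelow c b n + if c n < b then 1 else 0 := by
  rw [countBelow, countBelow, Nat.Ico_succ_right_eq_insert_Ico hn, filter_insert]
  split_ifs <;> simp

theorem countBelow_add_of_forall {a b p t : ℕ} (hp : 1 ≤ p) (h : ∀ s < t, c (p + s) = a) :
    countBelow c b (p + t) = countBelow c b p + if a < b then t else 0 := by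
  induction t with
  | zero => simp
  | succ t ih =>
    rw [← add_assoc, countBelow_succ (by omega), ih fun s hs => h s (by omega), h t t.lt_succ_self]
    split_ifs <;> omega

theorem ascPairCount_add_of_forall {a p t : ℕ} (hp : 1 ≤ p) (h : ∀ s < t, c (p + s) = a) :
    ascPairCount c (p + t) = ascPairCount c p + t * countBelow c a p := by
  induction t with
  | zero => simp
  | succ t ih =>
    rw [← add_assoc, ascPairCount, sum_range_succ, ← ascPairCount, ih fun s hs => h s (by omega),
      h t t.lt_succ_self, countBelow_add_of_forall hp fun s hs => h s (by omega),
      if_neg (lt_irrefl a)]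
    ring

end Counting

def blockColors : List ℕ :=
  [3, 3, 3, 4, 4, 0, 4, 4, 5, 0, 5, 0, 5, 6, 0, 1, 6, 0, 5, 1, 5, 1, 6, 1,
   6, 1, 2, 2, 3, 6, 1, 5, 1, 6, 1, 2, 6, 2, 2, 2, 6, 2, 2, 2, 6, 2, 2, 3]

-- The first three base-4 digits of `i ≥ 1`, padded with zeros: a number in `[16, 64)`.
def leadingDigits (i : ℕ) : ℕ := i * 64 / 4 ^ (Nat.log 4 i + 1)

def color (i : ℕ) : ℕ := blockColors.getD (leadingDigits i - 16) 0

theorem color_lt_seven (i : ℕ) : color i < 7 := by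
  rw [color]
  rcases lt_or_ge (leadingDigits i - 16) 48 with h | h
  · generalize leadingDigits i - 16 = s at h
    interval_cases s <;> decide
  · rw [List.getD_eq_default _ _ h]
    norm_num

theorem leadingDigits_mul_pow_add {m T t : ℕ} (hT : 16 ≤ T) (hT' : T < 64) (ht : t < 4 ^ m) :
    leadingDigits (T * 4 ^ m + t) = T := by
  have hlog : Nat.log 4 (T * 4 ^ m + t) = m + 2 := by
    rw [Nat.log_eq_iff (Or.inl (by omega))]
    rw [show 4 ^ (m + 2) = 4 ^ m * 16 by ring, show 4 ^ (m + 2 + 1) = 4 ^ m * 64 by ring]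
    constructor <;> nlinarith
  rw [leadingDigits, hlog, show 4 ^ (m + 2 + 1) = 4 ^ m * 64 by ring,
    Nat.mul_div_mul_right _ _ (by norm_num), add_comm, Nat.add_mul_div_right _ _ (by positivity),
    Nat.div_eq_of_lt ht, zero_add]

theorem color_mul_pow_add {m T t : ℕ} (hT : 16 ≤ T) (hT' : T < 64) (ht : t < 4 ^ m) :
    color (T * 4 ^ m + t) = color T := by
  have hT₀ := leadingDigits_mul_pow_add (m := 0) hT hT' (Nat.one_pos)
  rw [pow_zero, mul_one, add_zero] at hT₀
  rw [color, color, leadingDigits_mul_pow_add hT hT' ht, hT₀]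

theorem exists_eq_mul_pow_add {n : ℕ} (hn : 16 ≤ n) :
    ∃ m T t, 16 ≤ T ∧ T < 64 ∧ t < 4 ^ m ∧ T * 4 ^ m + t = n := by
  obtain ⟨m, hm⟩ : ∃ m, Nat.log 4 n = m + 2 :=
    ⟨_, (Nat.sub_add_cancel (Nat.le_log_of_pow_le (by norm_num) (by omega))).symm⟩
  have hlo : 4 ^ m * 16 ≤ n := by
    calc 4 ^ m * 16 = 4 ^ Nat.log 4 n := by rw [hm]; ring
      _ ≤ n := Nat.pow_log_le_self 4 (by omega)
  have hhi : n < 4 ^ m * 64 := by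
    calc n < 4 ^ (Nat.log 4 n + 1) := Nat.lt_pow_succ_log_self (by norm_num) n
      _ = 4 ^ m * 64 := by rw [hm]; ring
  refine ⟨m, n / 4 ^ m, n % 4 ^ m, ?_, ?_, Nat.mod_lt _ (by positivity), ?_⟩
  · exact (Nat.le_div_iff_mul_le (by positivity)).2 (by linarith)
  · exact (Nat.div_lt_iff_lt_mul (by positivity)).2 (by linarith)
  · rw [mul_comm]; exact Nat.div_add_mod n (4 ^ m)

def blocksBelow (b T : ℕ) : ℕ := #{T' ∈ Ico 16 T | color T' < b}

-- Vertices in `[1, 16)`, then the complete levels `m' < m` (`1 + 4 + ⋯ + 4^(m-1) = (x - 1)/3`),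
-- then the blocks of level `m` before `T`.
noncomputable def countBelowPoly (b T : ℕ) (x : ℝ) : ℝ :=
  countBelow color b 16 + blocksBelow b 64 * (x - 1) / 3 + blocksBelow b T * x

def sumInitial (T : ℕ) : ℕ := ∑ T' ∈ Ico 16 T, countBelow color (color T') 16

def sumFullLevels (T : ℕ) : ℕ := ∑ T' ∈ Ico 16 T, blocksBelow (color T') 64

def sumCurrentLevel (T : ℕ) : ℕ := ∑ T' ∈ Ico 16 T, blocksBelow (color T') T'

theorem blocksBelow_succ {b T : ℕ} (hT : 16 ≤ T) :
    blocksBelow b (T + 1) = blocksBelow b T + if color T < b then 1 else 0 := by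
  rw [blocksBelow, blocksBelow, Nat.Ico_succ_right_eq_insert_Ico hT, filter_insert]
  split_ifs <;> simp

theorem sumInitial_succ {T : ℕ} (hT : 16 ≤ T) :
    sumInitial (T + 1) = sumInitial T + countBelow color (color T) 16 := sum_Ico_succ_top hT _

theorem sumFullLevels_succ {T : ℕ} (hT : 16 ≤ T) :
    sumFullLevels (T + 1) = sumFullLevels T + blocksBelow (color T) 64 := sum_Ico_succ_top hT _

theorem sumCurrentLevel_succ {T : ℕ} (hT : 16 ≤ T) :
    sumCurrentLevel (T + 1) = sumCurrentLevel T + blocksBelow (color T) T := sum_Ico_succ_top hT _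

theorem blocksBelow_sixteen {b : ℕ} : blocksBelow b 16 = 0 := rfl

theorem sumInitial_sixteen : sumInitial 16 = 0 := rfl

theorem sumFullLevels_sixteen : sumFullLevels 16 = 0 := rfl

theorem sumCurrentLevel_sixteen : sumCurrentLevel 16 = 0 := rfl

-- The first three terms form the quadratic `E` with `E 1 = ascPairCount color 16` and
-- `E (4x) = E x + x * ∑ T ∈ [16, 64), countBelowPoly (color T) T x`.
noncomputable def ascPairPoly (T : ℕ) (x : ℝ) : ℝ :=
  ascPairCount color 16 + (sumFullLevels 64 + 3 * sumCurrentLevel 64) * (x ^ 2 - 1) / 45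
    + (3 * sumInitial 64 - sumFullLevels 64) * (x - 1) / 9
    + x * (sumInitial T + sumFullLevels T * (x - 1) / 3 + sumCurrentLevel T * x)

def CountsAt (T m : ℕ) : Prop :=
  (∀ b, (countBelow color b (T * 4 ^ m) : ℝ) = countBelowPoly b T (4 ^ m)) ∧
    (ascPairCount color (T * 4 ^ m) : ℝ) = ascPairPoly T (4 ^ m)

theorem countsAt_sixteen_zero : CountsAt 16 0 := by
  refine ⟨fun b => ?_, ?_⟩
  · simp [countBelowPoly, blocksBelow_sixteen]
  · simp [ascPairPoly, sumInitial_sixteen, sumFullLevels_sixteen, sumCurrentLevel_sixteen]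

theorem CountsAt.succ {T m : ℕ} (hT : 16 ≤ T) (hT' : T < 64) (h : CountsAt T m) :
    CountsAt (T + 1) m := by
  have hblock : ∀ s < 4 ^ m, color (T * 4 ^ m + s) = color T := fun s hs =>
    color_mul_pow_add hT hT' hs
  have hpos : 1 ≤ T * 4 ^ m := Nat.one_le_iff_ne_zero.2 (by positivity)
  rw [CountsAt, add_mul, one_mul]
  refine ⟨fun b => ?_, ?_⟩
  · rw [countBelow_add_of_forall hpos hblock, Nat.cast_add, h.1 b, countBelowPoly, countBelowPoly,
      blocksBelow_succ hT]
    split_ifs <;> push_cast <;> ring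
  · rw [ascPairCount_add_of_forall hpos hblock, Nat.cast_add, Nat.cast_mul, h.2, h.1,
      ascPairPoly, ascPairPoly, sumInitial_succ hT, sumFullLevels_succ hT, sumCurrentLevel_succ hT,
      countBelowPoly]
    push_cast
    ring

theorem CountsAt.sixteen_succ {m : ℕ} (h : CountsAt 64 m) : CountsAt 16 (m + 1) := by
  rw [CountsAt, show 16 * 4 ^ (m + 1) = 64 * 4 ^ m by ring]
  refine ⟨fun b => ?_, ?_⟩
  · rw [h.1 b, countBelowPoly, countBelowPoly, blocksBelow_sixteen]
    push_cast
    ring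
  · rw [h.2, ascPairPoly, ascPairPoly, sumInitial_sixteen, sumFullLevels_sixteen,
      sumCurrentLevel_sixteen]
    push_cast
    ring

theorem CountsAt.of_sixteen {m T : ℕ} (h : CountsAt 16 m) (hT : 16 ≤ T) (hT' : T ≤ 64) :
    CountsAt T m := by
  induction T, hT using Nat.le_induction with
  | base => exact h
  | succ T hT ih => exact (ih (by omega)).succ hT (by omega)

theorem countsAt_sixteen (m : ℕ) : CountsAt 16 m := by
  induction m with
  | zero => exact countsAt_sixteen_zero
  | succ m ih => exact (ih.of_sixteen (by norm_num) le_rfl).sixteen_succ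

def excessCoeff₂ (T : ℕ) : ℤ :=
  1701 * ((sumFullLevels 64 : ℤ) + 3 * sumCurrentLevel 64 + 15 * sumFullLevels T
    + 45 * sumCurrentLevel T) - 16425 * T ^ 2

def excessCoeff₁ (T : ℕ) : ℤ :=
  8505 * (3 * (sumInitial 64 : ℤ) - sumFullLevels 64) + 76545 * sumInitial T
    - 25515 * sumFullLevels T + 382725 * T

def excessCoeff₀ : ℤ :=
  76545 * (ascPairCount color 16 : ℤ) - 1701 * (sumFullLevels 64 + 3 * sumCurrentLevel 64)
    - 8505 * (3 * sumInitial 64 - sumFullLevels 64)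

theorem ascPairPoly_sub_eq (T : ℕ) (x : ℝ) :
    76545 * (ascPairPoly T x - (365 / 1701 * (T * x) ^ 2 - 5 * (T * x))) =
      excessCoeff₂ T * x ^ 2 + excessCoeff₁ T * x + excessCoeff₀ := by
  rw [ascPairPoly, excessCoeff₂, excessCoeff₁, excessCoeff₀]
  push_cast
  ring

theorem excessCoeff_nonneg : ∀ T ∈ Icc 16 64, 0 ≤ excessCoeff₂ T ∧ 0 ≤ excessCoeff₁ T ∧
    0 ≤ excessCoeff₂ T + excessCoeff₁ T + excessCoeff₀ := by
  decide

theorem ascPairCount_color_mul_pow_ge (m : ℕ) {T : ℕ} (hT : 16 ≤ T) (hT' : T ≤ 64) :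
    365 / 1701 * ((T * 4 ^ m : ℕ) : ℝ) ^ 2 - 5 * (T * 4 ^ m : ℕ) ≤
      ascPairCount color (T * 4 ^ m) := by
  obtain ⟨h₂, h₁, h₀⟩ := excessCoeff_nonneg T (mem_Icc.2 ⟨hT, hT'⟩)
  have hexcess : (0 : ℝ) ≤ excessCoeff₂ T * (4 ^ m) ^ 2 + excessCoeff₁ T * 4 ^ m + excessCoeff₀ :=
    quadratic_nonneg_of_one_le (by exact_mod_cast h₂) (by exact_mod_cast h₁)
      (by exact_mod_cast h₀) (one_le_pow₀ (by norm_num))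
  rw [← ascPairPoly_sub_eq] at hexcess
  obtain ⟨-, hcount⟩ := (countsAt_sixteen m).of_sixteen hT hT'
  rw [hcount]
  push_cast
  linarith

theorem ascPairCount_color_ge {n : ℕ} (hn : 16 ≤ n) :
    365 / 1701 * (n : ℝ) ^ 2 - 5 * n ≤ ascPairCount color n := by
  obtain ⟨m, T, t, hT, hT', ht, rfl⟩ := exists_eq_mul_pow_add hn
  have hblock : ∀ s < 4 ^ m, color (T * 4 ^ m + s) = color T := fun s hs =>
    color_mul_pow_add hT hT' hs
  have hpos : 1 ≤ T * 4 ^ m := Nat.one_le_iff_ne_zero.2 (by positivity)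
  have h₀ := ascPairCount_color_mul_pow_ge m hT hT'.le
  have h₁ := ascPairCount_color_mul_pow_ge m (T := T + 1) (by omega) hT'
  rw [add_mul, one_mul, ascPairCount_add_of_forall hpos hblock] at h₁
  rw [ascPairCount_add_of_forall hpos fun s hs => hblock s (hs.trans ht)]
  push_cast at h₀ h₁ ⊢
  exact sq_sub_le_affine_of_endpoints (by norm_num) (Nat.cast_nonneg _) (by exact_mod_cast ht.le)
    h₀ h₁

theorem exists_I7_free_graph_with_large_liminf :
    ∃ G : SimpleGraph ℕ, ¬ HasIncPath G 7 ∧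
      (365 / 1701 : ℝ) ≤
        liminf (fun n : ℕ => (edgeCount G n : ℝ) / n ^ 2) atTop := by
  refine ⟨colorGraph color, not_hasIncPath_colorGraph color_lt_seven,
    le_liminf_div_sq (β := 5) ?_ (edgeCount_le_sq _)⟩
  filter_upwards [eventually_ge_atTop 16] with n hn
  have := ascPairCount_color_ge (n := n + 1) (by omega)
  rw [edgeCount_colorGraph]
  push_cast at this ⊢
  nlinarith
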